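/- A finite-dimensional unital Jordan superalgebra J over a field of characteristic 0 admits no surjective derivation: if δ ∈ Der J is surjective then J = 0. -/

import Mathlib

/-!
A derivation kills the unit, since `δ 1 = δ (1 ∘ 1) = 2 δ 1`, while a surjective endomorphism of a
finite-dimensional space is injective. Hence `1 = 0`, and then `x = 1 ∘ x = 0` for every `x`.
-/

/-- The sign `(−1)^{ij}` attached to a pair of parities. -/
def eps (F : Type*) [Field F] (i j : ZMod 2) : F := if i = 1 ∧ j = 1 then -1 else 1

@[simp]
theorem eps_zero_right (F : Type*) [Field F] (i : ZMod 2) : eps F i 0 = 1 := by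
  simp [eps]

theorem map_unit_eq_zero_of_leibniz {J : Type*} [AddGroup J] (m : J → J → J) (one : J)
    (hone : ∀ x : J, m one x = x ∧ m x one = x) (δ : J → J)
    (hleibniz : δ (m one one) = m (δ one) one + m one (δ one)) : δ one = 0 := by
  rw [(hone one).1, (hone (δ one)).2, (hone (δ one)).1] at hleibniz
  exact left_eq_add.mp hleibniz

theorem eq_zero_of_unit_eq_zero {R J : Type*} [CommSemiring R] [AddCommMonoid J] [Module R J]
    (m : J →ₗ[R] J →ₗ[R] J) (one : J) (hone : ∀ x : J, m one x = x) (h : one = 0) (x : J) :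
    x = 0 := by
  rw [← hone x, h, map_zero, LinearMap.zero_apply]

theorem no_surjective_derivation_general {F J : Type*} [Field F]
    [AddCommGroup J] [Module F J] [FiniteDimensional F J]
    (m : J →ₗ[F] J →ₗ[F] J)
    (g : ZMod 2 → Submodule F J)
    (one : J) (hone : ∀ x : J, m one x = x ∧ m x one = x) (honeg : one ∈ g 0)
    (δ : J →ₗ[F] J) (pδ : ZMod 2)
    (hδ : ∀ i j, ∀ a ∈ g i, ∀ b ∈ g j,
      δ (m a b) = m (δ a) b + eps F pδ i • m a (δ b))
    (hsurj : Function.Surjective δ) :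
    ∀ x : J, x = 0 := by
  have hδone : δ one = 0 := map_unit_eq_zero_of_leibniz (fun a b => m a b) one hone δ
    (by simpa using hδ 0 0 one honeg one honeg)
  have hinj : Function.Injective δ := LinearMap.injective_iff_surjective.mpr hsurj
  have hone_eq_zero : one = 0 := hinj (hδone.trans δ.map_zero.symm)
  exact eq_zero_of_unit_eq_zero m one (fun x => (hone x).1) hone_eq_zero

/-- A finite-dimensional unital Jordan superalgebra over a field of
characteristic `0` admits no surjective derivation: if `δ ∈ Der J` is
surjective then `J = 0`. -/
theorem no_surjective_derivation {F J : Type*} [Field F] [CharZero F]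
    [AddCommGroup J] [Module F J] [FiniteDimensional F J]
    (m : J →ₗ[F] J →ₗ[F] J)
    (g : ZMod 2 → Submodule F J)
    (one : J) (hone : ∀ x : J, m one x = x ∧ m x one = x) (honeg : one ∈ g 0)
    (hsupercomm : ∀ i j, ∀ a ∈ g i, ∀ b ∈ g j, m a b = eps F i j • m b a)
    (hjordan : ∀ pa pb pc pd, ∀ a ∈ g pa, ∀ b ∈ g pb, ∀ c ∈ g pc, ∀ d ∈ g pd,
      eps F pa pc • m (m a b) (m c d) + eps F pa pb • m (m b c) (m a d)
          + eps F pb pc • m (m c a) (m b d) =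
        eps F pa pc • m a (m (m b c) d) + eps F pa pb • m b (m (m c a) d)
          + eps F pb pc • m c (m (m a b) d))
    (δ : J →ₗ[F] J) (pδ : ZMod 2)
    (hδg : ∀ i, ∀ a ∈ g i, δ a ∈ g (i + pδ))
    (hδ : ∀ i j, ∀ a ∈ g i, ∀ b ∈ g j,
      δ (m a b) = m (δ a) b + eps F pδ i • m a (δ b))
    (hsurj : Function.Surjective δ) :
    ∀ x : J, x = 0 :=
  no_surjective_derivation_general m g one hone honeg δ pδ hδ hsurj
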